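/- Let d ≥ 1, let Ω ⊆ ℝ^d be open, let r, r' > 1 be conjugate exponents, let ν, h₀ > 0, λ ∈ ℝ, and let f : Ω × ℝ → ℝ. Let φ : Ω → ℝ be C¹ with φ(x) > 0 for all x ∈ Ω, and let u : Ω → ℝ be C². Set μ := ν (ν r / h₀)^{r-1}. Assume that the vector field V : x ↦ |∇φ(x)|^{r-2} ∇φ(x) is C¹ on Ω and that for every x ∈ Ω: -μ · div V(x) + (f(x, φ(x)^r) - λ) φ(x)^{r-1} = 0, and moreover h₀ φ(x) |∇u(x)|^{r'-2} ∇u(x) + ν r ∇φ(x) = 0. Define m := φ^r. Then for every x ∈ Ω: ν ∇m(x) + h₀ m(x) |∇u(x)|^{r'-2} ∇u(x) = 0 (so m solves the Kolmogorov equation), and -ν Δu(x) + (h₀/r') |∇u(x)|^{r'} + λ = f(x, m(x)) (so (u, λ) solves the Hamilton-Jacobi-Bellman equation pointwise). -/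

import Mathlib

/-!
Write `J_p ξ = |ξ|^{p-2} ξ`. The coupling relation says `∇φ = -(a φ) J_{r'}(∇u)` with
`a = h₀/(ν r)`. Since `J_r` is positively `(r-1)`-homogeneous and `J_r ∘ J_{r'} = id` for
conjugate exponents, the vector field of the PDE is `V = J_r(∇φ) = -(a φ)^{r-1} ∇u`. The product
rule and `⟨J_{r'} ξ, ξ⟩ = |ξ|^{r'}` then give `div V = -(a φ)^{r-1} (Δu - (r-1) a |∇u|^{r'})`,
and dividing the PDE by `φ^{r-1} > 0` leaves the HJB equation. The Kolmogorov equation is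
`φ^{r-1}` times the coupling relation, because `∇(φ^r) = r φ^{r-1} ∇φ`.
-/

/-- Divergence of a vector field on `ℝ^d`: `div V = ∑ i ∂ᵢ Vᵢ`. -/
noncomputable def vdiv {d : ℕ} (V : EuclideanSpace ℝ (Fin d) → EuclideanSpace ℝ (Fin d))
    (x : EuclideanSpace ℝ (Fin d)) : ℝ :=
  ∑ i, fderiv ℝ V x (EuclideanSpace.single i 1) i

/-- Laplacian on `ℝ^d`: `Δ f = div (∇ f)`. -/
noncomputable def lap {d : ℕ} (f : EuclideanSpace ℝ (Fin d) → ℝ)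
    (x : EuclideanSpace ℝ (Fin d)) : ℝ :=
  vdiv (gradient f) x

open InnerProductSpace Filter Topology
open scoped RealInnerProductSpace

section DualityMap

variable {E : Type*} [NormedAddCommGroup E] [InnerProductSpace ℝ E]

noncomputable def dualityMap (p : ℝ) (v : E) : E := ‖v‖ ^ (p - 2) • v

@[simp]
lemma dualityMap_zero (p : ℝ) : dualityMap p (0 : E) = 0 := by
  simp [dualityMap]

lemma dualityMap_neg (p : ℝ) (v : E) : dualityMap p (-v) = -dualityMap p v := by
  simp [dualityMap]

lemma dualityMap_smul_of_pos {c : ℝ} (hc : 0 < c) (p : ℝ) (v : E) :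
    dualityMap p (c • v) = c ^ (p - 1) • dualityMap p v := by
  rw [dualityMap, dualityMap, norm_smul, Real.norm_of_nonneg hc.le,
    Real.mul_rpow hc.le (norm_nonneg v), smul_smul, smul_smul, mul_right_comm,
    ← Real.rpow_add_one hc.ne']
  ring_nf

lemma norm_dualityMap_of_ne_zero (p : ℝ) {v : E} (hv : v ≠ 0) :
    ‖dualityMap p v‖ = ‖v‖ ^ (p - 1) := by
  have hv' := norm_pos_iff.2 hv
  rw [dualityMap, norm_smul, Real.norm_of_nonneg (by positivity), ← Real.rpow_add_one hv'.ne']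
  ring_nf

lemma dualityMap_dualityMap {p q : ℝ} (hpq : p.HolderConjugate q) (v : E) :
    dualityMap p (dualityMap q v) = v := by
  rcases eq_or_ne v 0 with rfl | hv
  · simp
  have hv' := norm_pos_iff.2 hv
  rw [dualityMap, norm_dualityMap_of_ne_zero q hv, dualityMap, smul_smul,
    ← Real.rpow_mul hv'.le, ← Real.rpow_add hv',
    show (q - 1) * (p - 2) + (q - 2) = 0 by linear_combination hpq.symm.sub_one_mul_conj,
    Real.rpow_zero, one_smul]

lemma inner_dualityMap_self {p : ℝ} (hp : p ≠ 0) (v : E) :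
    ⟪dualityMap p v, v⟫ = ‖v‖ ^ p := by
  rcases eq_or_ne v 0 with rfl | hv
  · simp [Real.zero_rpow hp]
  rw [dualityMap, real_inner_smul_left, real_inner_self_eq_norm_sq, ← Real.rpow_natCast,
    ← Real.rpow_add (norm_pos_iff.2 hv)]
  norm_num

end DualityMap

lemma eq_neg_div_smul_of_smul_add_smul_eq_zero {E : Type*} [AddCommGroup E] [Module ℝ E]
    {a b : ℝ} (hb : b ≠ 0) {v w : E} (h : a • w + b • v = 0) : v = -((a / b) • w) := by
  rw [div_eq_inv_mul, mul_smul, ← smul_neg, eq_inv_smul_iff₀ hb, eq_neg_of_add_eq_zero_right h]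

section Gradient

variable {E : Type*} [NormedAddCommGroup E] [InnerProductSpace ℝ E] [CompleteSpace E]
  {φ : E → ℝ} {x : E}

lemma gradient_const_mul (c : ℝ) (hφ : DifferentiableAt ℝ φ x) :
    gradient (fun y => c * φ y) x = c • gradient φ x := by
  rw [gradient, gradient, fderiv_const_mul hφ, map_smul]

lemma gradient_rpow_const (hφ : DifferentiableAt ℝ φ x) (hx : φ x ≠ 0) (p : ℝ) :
    gradient (fun y => φ y ^ p) x = (p * φ x ^ (p - 1)) • gradient φ x := by
  rw [gradient, gradient, (hφ.hasFDerivAt.rpow_const (Or.inl hx)).fderiv, map_smul]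

lemma ContDiffAt.differentiableAt_gradient {n : WithTop ℕ∞} (hφ : ContDiffAt ℝ n φ x)
    (hn : 2 ≤ n) : DifferentiableAt ℝ (gradient φ) x :=
  (toDual ℝ E).symm.toContinuousLinearEquiv.differentiableAt.comp x
    ((hφ.fderiv_right (m := 1) (by simpa [one_add_one_eq_two] using hn)).differentiableAt one_ne_zero)

lemma smul_gradient_rpow_add_smul_eq_zero {w : E} {r ν h₀ : ℝ}
    (hφ : DifferentiableAt ℝ φ x) (hφx : 0 < φ x)
    (h : (h₀ * φ x) • w + (ν * r) • gradient φ x = 0) :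
    ν • gradient (fun y => φ y ^ r) x + (h₀ * φ x ^ r) • w = 0 := by
  have hφr : φ x ^ r = φ x ^ (r - 1) * φ x := by
    rw [← Real.rpow_add_one hφx.ne', sub_add_cancel]
  calc ν • gradient (fun y => φ y ^ r) x + (h₀ * φ x ^ r) • w
      = φ x ^ (r - 1) • ((h₀ * φ x) • w + (ν * r) • gradient φ x) := by
        rw [gradient_rpow_const hφ hφx.ne', hφr]; module
    _ = 0 := by rw [h, smul_zero]

end Gradient

section Divergence

variable {d : ℕ} {x : EuclideanSpace ℝ (Fin d)}

lemma Filter.EventuallyEq.vdiv_eq {V W : EuclideanSpace ℝ (Fin d) → EuclideanSpace ℝ (Fin d)}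
    (h : V =ᶠ[𝓝 x] W) : vdiv V x = vdiv W x := by
  simp only [vdiv, h.fderiv_eq]

lemma vdiv_smul {g : EuclideanSpace ℝ (Fin d) → ℝ}
    {w : EuclideanSpace ℝ (Fin d) → EuclideanSpace ℝ (Fin d)}
    (hg : DifferentiableAt ℝ g x) (hw : DifferentiableAt ℝ w x) :
    vdiv (fun y => g y • w y) x = g x * vdiv w x + ⟪gradient g x, w x⟫ := by
  rw [vdiv, vdiv, fderiv_fun_smul hg hw, Finset.mul_sum, PiLp.inner_apply,
    ← Finset.sum_add_distrib]
  refine Finset.sum_congr rfl fun i _ => ?_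
  have : fderiv ℝ g x (EuclideanSpace.single i 1) = gradient g x i := by
    rw [← inner_gradient_left, EuclideanSpace.inner_single_right]; simp
  simp [this, mul_comm]

lemma vdiv_dualityMap_gradient_of_gradient_eq {r r' a : ℝ} (hrr' : r.HolderConjugate r')
    (ha : 0 < a) {φ u : EuclideanSpace ℝ (Fin d) → ℝ}
    (hφ : DifferentiableAt ℝ φ x) (hu : DifferentiableAt ℝ (gradient u) x)
    (hgrad : ∀ᶠ y in 𝓝 x,
      0 < φ y ∧ gradient φ y = -((a * φ y) • dualityMap r' (gradient u y))) :
    vdiv (fun y => dualityMap r (gradient φ y)) x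
      = -(a ^ (r - 1) * φ x ^ (r - 1)) * (lap u x - (r - 1) * a * ‖gradient u x‖ ^ r') := by
  obtain ⟨hφx, hgx⟩ := hgrad.self_of_nhds
  have hV : (fun y => dualityMap r (gradient φ y))
      =ᶠ[𝓝 x] fun y => (-a ^ (r - 1) * φ y ^ (r - 1)) • gradient u y :=
    hgrad.mono fun y ⟨hφy, hgy⟩ => by
      dsimp only
      rw [hgy, dualityMap_neg, dualityMap_smul_of_pos (by positivity),
        dualityMap_dualityMap hrr', Real.mul_rpow ha.le hφy.le, neg_mul, neg_smul]
  have hφr := hφ.rpow_const (p := r - 1) (Or.inl hφx.ne')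
  have hφpow : φ x ^ (r - 1 - 1) * φ x = φ x ^ (r - 1) := by
    rw [← Real.rpow_add_one hφx.ne', sub_add_cancel]
  rw [hV.vdiv_eq, vdiv_smul (hφr.const_mul _) hu, gradient_const_mul _ hφr,
    gradient_rpow_const hφ hφx.ne', hgx, smul_smul, real_inner_smul_left, inner_neg_left,
    real_inner_smul_left, inner_dualityMap_self hrr'.symm.ne_zero, lap]
  linear_combination (a ^ (r - 1) * (r - 1) * a * ‖gradient u x‖ ^ r') * hφpow

lemma hjb_of_pde_of_coupling {r r' ν h₀ lam F : ℝ} (hrr' : r.HolderConjugate r')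
    (hν : 0 < ν) (hh₀ : 0 < h₀) {φ u : EuclideanSpace ℝ (Fin d) → ℝ}
    (hφ : DifferentiableAt ℝ φ x) (hu : DifferentiableAt ℝ (gradient u) x)
    (hcpl : ∀ᶠ y in 𝓝 x,
      0 < φ y ∧ (h₀ * φ y) • dualityMap r' (gradient u y) + (ν * r) • gradient φ y = 0)
    (hPDE : -(ν * (ν * r / h₀) ^ (r - 1)) * vdiv (fun y => dualityMap r (gradient φ y)) x
      + (F - lam) * φ x ^ (r - 1) = 0) :
    -ν * lap u x + (h₀ / r') * ‖gradient u x‖ ^ r' + lam = F := by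
  have hr := hrr'.pos
  have hgrad : ∀ᶠ y in 𝓝 x,
      0 < φ y ∧ gradient φ y = -((h₀ / (ν * r) * φ y) • dualityMap r' (gradient u y)) :=
    hcpl.mono fun y ⟨hφy, hy⟩ => ⟨hφy, by
      rw [div_mul_eq_mul_div]
      exact eq_neg_div_smul_of_smul_add_smul_eq_zero (by positivity) hy⟩
  have hdiv := vdiv_dualityMap_gradient_of_gradient_eq hrr' (by positivity) hφ hu hgrad
  set a := h₀ / (ν * r) with ha
  have hμ : (ν * r / h₀) ^ (r - 1) * a ^ (r - 1) = 1 := by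
    rw [← Real.mul_rpow (by positivity) (by positivity),
      show ν * r / h₀ * a = 1 by rw [ha]; field_simp, Real.one_rpow]
  have hcoef : ν * ((r - 1) * a) = h₀ / r' := by
    calc ν * ((r - 1) * a) = h₀ * (1 - r⁻¹) := by rw [ha]; field_simp
      _ = h₀ / r' := by rw [hrr'.one_sub_inv, div_eq_mul_inv]
  have hfactor : φ x ^ (r - 1) *
      (-ν * lap u x + h₀ / r' * ‖gradient u x‖ ^ r' + lam - F) = 0 := by
    rw [← hcoef]
    linear_combination -hPDE + (-(ν * r / h₀) ^ (r - 1) * ν) * hdiv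
      + (ν * φ x ^ (r - 1) * (lap u x - (r - 1) * a * ‖gradient u x‖ ^ r')) * hμ
  have hφr : φ x ^ (r - 1) ≠ 0 := (Real.rpow_pos_of_pos hcpl.self_of_nhds.1 _).ne'
  linarith [(mul_eq_zero.1 hfactor).resolve_left hφr]

end Divergence

theorem generalized_hopf_cole_b_general (d : ℕ)
    (Ω : Set (EuclideanSpace ℝ (Fin d))) (hΩ : IsOpen Ω)
    (r r' ν h₀ lam : ℝ) (hr : 1 < r) (hconj : 1 / r + 1 / r' = 1)
    (hν : 0 < ν) (hh₀ : 0 < h₀)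
    (f : EuclideanSpace ℝ (Fin d) → ℝ → ℝ)
    (φ u : EuclideanSpace ℝ (Fin d) → ℝ)
    (hφ : ContDiffOn ℝ 1 φ Ω) (hφpos : ∀ x ∈ Ω, 0 < φ x)
    (hu : ContDiffOn ℝ 2 u Ω)
    (hPDE : ∀ x ∈ Ω,
      -(ν * (ν * r / h₀) ^ (r - 1)) *
          vdiv (fun y => ‖gradient φ y‖ ^ (r - 2) • gradient φ y) x +
        (f x (φ x ^ r) - lam) * φ x ^ (r - 1) = 0)
    (hcoupling : ∀ x ∈ Ω,
      (h₀ * φ x * ‖gradient u x‖ ^ (r' - 2)) • gradient u x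
        + (ν * r) • gradient φ x = 0) :
    (∀ x ∈ Ω,
      ν • gradient (fun y => φ y ^ r) x +
        (h₀ * φ x ^ r * ‖gradient u x‖ ^ (r' - 2)) • gradient u x = 0) ∧
    (∀ x ∈ Ω,
      -ν * lap u x + (h₀ / r') * ‖gradient u x‖ ^ r' + lam = f x (φ x ^ r)) := by
  have hrr' : r.HolderConjugate r' :=
    Real.holderConjugate_iff.2 ⟨hr, by simpa only [one_div] using hconj⟩
  have hφd : ∀ x ∈ Ω, DifferentiableAt ℝ φ x := fun x hx =>
    (hφ.contDiffAt (hΩ.mem_nhds hx)).differentiableAt one_ne_zero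
  have hcpl : ∀ y ∈ Ω,
      0 < φ y ∧ (h₀ * φ y) • dualityMap r' (gradient u y) + (ν * r) • gradient φ y = 0 :=
    fun y hy => ⟨hφpos y hy, by simpa only [dualityMap, smul_smul] using hcoupling y hy⟩
  refine ⟨fun x hx => ?_, fun x hx => ?_⟩
  · simpa only [dualityMap, smul_smul] using
      smul_gradient_rpow_add_smul_eq_zero (hφd x hx) (hcpl x hx).1 (hcpl x hx).2
  · exact hjb_of_pde_of_coupling hrr' hν hh₀ (hφd x hx)
      ((hu.contDiffAt (hΩ.mem_nhds hx)).differentiableAt_gradient le_rfl)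
      (eventually_of_mem (hΩ.mem_nhds hx) hcpl) (hPDE x hx)

/-- (Generalized Hopf–Cole transformation, part b), pointwise version.)
Let `d ≥ 1`, `Ω ⊆ ℝ^d` open, `r, r' > 1` conjugate exponents, `ν, h₀ > 0`, `λ ∈ ℝ`,
`f : Ω × ℝ → ℝ`. Let `φ` be `C¹` and positive on `Ω`, `u` be `C²` on `Ω`, and
`μ := ν (νr/h₀)^{r-1}`. Assume `V = |∇φ|^{r-2} ∇φ` is `C¹` on `Ω`, that
`-μ div V + (f(x,φ^r) - λ) φ^{r-1} = 0` on `Ω`, and the coupling relation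
`h₀ φ |∇u|^{r'-2} ∇u + ν r ∇φ = 0` on `Ω`. With `m := φ^r`, on `Ω` one has
`ν ∇m + h₀ m |∇u|^{r'-2} ∇u = 0` (Kolmogorov) and
`-ν Δu + (h₀/r')|∇u|^{r'} + λ = f(x, m)` (HJB, pointwise). -/
theorem generalized_hopf_cole_b (d : ℕ) (hd : 1 ≤ d)
    (Ω : Set (EuclideanSpace ℝ (Fin d))) (hΩ : IsOpen Ω)
    (r r' ν h₀ lam : ℝ) (hr : 1 < r) (hr' : 1 < r') (hconj : 1 / r + 1 / r' = 1)
    (hν : 0 < ν) (hh₀ : 0 < h₀)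
    (f : EuclideanSpace ℝ (Fin d) → ℝ → ℝ)
    (φ u : EuclideanSpace ℝ (Fin d) → ℝ)
    (hφ : ContDiffOn ℝ 1 φ Ω) (hφpos : ∀ x ∈ Ω, 0 < φ x)
    (hu : ContDiffOn ℝ 2 u Ω)
    (hV : ContDiffOn ℝ 1 (fun x => ‖gradient φ x‖ ^ (r - 2) • gradient φ x) Ω)
    (hPDE : ∀ x ∈ Ω,
      -(ν * (ν * r / h₀) ^ (r - 1)) *
          vdiv (fun y => ‖gradient φ y‖ ^ (r - 2) • gradient φ y) x +
        (f x (φ x ^ r) - lam) * φ x ^ (r - 1) = 0)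
    (hcoupling : ∀ x ∈ Ω,
      (h₀ * φ x * ‖gradient u x‖ ^ (r' - 2)) • gradient u x
        + (ν * r) • gradient φ x = 0) :
    (∀ x ∈ Ω,
      ν • gradient (fun y => φ y ^ r) x +
        (h₀ * φ x ^ r * ‖gradient u x‖ ^ (r' - 2)) • gradient u x = 0) ∧
    (∀ x ∈ Ω,
      -ν * lap u x + (h₀ / r') * ‖gradient u x‖ ^ r' + lam = f x (φ x ^ r)) :=
  generalized_hopf_cole_b_general d Ω hΩ r r' ν h₀ lam hr hconj hν hh₀ f φ u hφ hφpos hu hPDE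
    hcoupling
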